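/- arXiv:2405.17045 — 3 statements merged into one kernel-verified Lean document; each statement's English description precedes it below -/
import Mathlib

section
/- Let L : B → C be a bounded linear operator between Banach spaces. Suppose that for every ε > 0 there exist finitely many continuous linear functionals l_1, …, l_N : B → ℝ such that ‖Lx‖_C ≤ ε‖x‖_B + Σ_{i=1}^N |l_i(x)| for all x ∈ B. Then L is a compact operator. -/
/-!
The functionals `lᵢ` assemble into a finite-rank operator `Φ = (lᵢ)ᵢ : B → ℝᴺ`, which maps the
unit ball onto a totally bounded set. On the unit ball the hypothesis gives
`‖L x - L y‖ ≤ 2ε + N ‖Φ x - Φ y‖`, so a fine finite net of `Φ(ball)` pulls back to a `3ε`-net of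
`L(ball)`. Hence `L(ball)` is totally bounded, and its closure is compact since `C` is complete.
-/

open Metric Set

theorem Metric.exists_finite_cover_image_of_dist_le {X Y Z : Type*} [PseudoMetricSpace Y]
    [PseudoMetricSpace Z] {f : X → Y} {g : X → Z} {s : Set X} (hg : TotallyBounded (g '' s))
    {δ C ε : ℝ} (hC : 0 ≤ C) (hδε : δ < ε)
    (hfg : ∀ x ∈ s, ∀ y ∈ s, dist (f x) (f y) ≤ δ + C * dist (g x) (g y)) :
    ∃ t : Set Y, t.Finite ∧ f '' s ⊆ ⋃ y ∈ t, ball y ε := by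
  set η := (ε - δ) / (C + 1)
  have hη : 0 < η := div_pos (sub_pos.2 hδε) (by linarith)
  have hCη : C * η < ε - δ := by
    rw [mul_div_assoc', div_lt_iff₀ (by linarith)]
    nlinarith
  obtain ⟨t, hts, htf, hcov⟩ := exists_subset_image_finite_and.1
    (totallyBounded_iff_subset.1 hg _ (dist_mem_uniformity hη))
  refine ⟨f '' t, htf.image f, ?_⟩
  rintro _ ⟨x, hx, rfl⟩
  obtain ⟨_, ⟨x', hx't, rfl⟩, hxx'⟩ := mem_iUnion₂.1 (hcov (mem_image_of_mem g hx))
  refine mem_iUnion₂.2 ⟨f x', mem_image_of_mem f hx't, ?_⟩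
  have hgx : dist (g x) (g x') < η := hxx'
  calc dist (f x) (f x') ≤ δ + C * dist (g x) (g x') := hfg x hx x' (hts hx't)
    _ ≤ δ + C * η := by gcongr
    _ < ε := by linarith

theorem sum_abs_le_card_mul_norm {ι : Type*} [Fintype ι] (v : ι → ℝ) :
    ∑ i, |v i| ≤ Fintype.card ι * ‖v‖ := by
  simpa [← Real.norm_eq_abs, ← Finset.card_univ] using
    Finset.sum_le_card_nsmul _ _ _ fun i _ ↦ norm_le_pi_norm v i

theorem ContinuousLinearMap.dist_le_of_norm_le_add_sum_abs {B C : Type*}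
    [NormedAddCommGroup B] [NormedSpace ℝ B] [NormedAddCommGroup C] [NormedSpace ℝ C]
    {L : B →L[ℝ] C} {N : ℕ} {l : Fin N → B →L[ℝ] ℝ} {ε : ℝ}
    (hl : ∀ x, ‖L x‖ ≤ ε * ‖x‖ + ∑ i, |l i x|) (x y : B) :
    dist (L x) (L y) ≤ ε * dist x y + N * dist (pi l x) (pi l y) := by
  rw [dist_eq_norm, dist_eq_norm, dist_eq_norm, ← map_sub, ← map_sub]
  calc ‖L (x - y)‖ ≤ ε * ‖x - y‖ + ∑ i, |l i (x - y)| := hl _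
    _ ≤ ε * ‖x - y‖ + N * ‖pi l (x - y)‖ := by
      simpa using sum_abs_le_card_mul_norm (pi l (x - y))

theorem compact_of_finitely_many_functionals_general
    {B C : Type*} [NormedAddCommGroup B] [NormedSpace ℝ B]
    [NormedAddCommGroup C] [NormedSpace ℝ C] [CompleteSpace C]
    (L : B →L[ℝ] C)
    (h : ∀ ε > (0 : ℝ), ∃ (N : ℕ) (l : Fin N → (B →L[ℝ] ℝ)),
      ∀ x : B, ‖L x‖ ≤ ε * ‖x‖ + ∑ i : Fin N, |l i x|) :
    IsCompactOperator L := by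
  suffices TotallyBounded (L '' closedBall 0 1) from
    (isCompactOperator_iff_isCompact_closure_image_closedBall (L : B →ₗ[ℝ] C) one_pos).2
      (this.closure.isCompact_of_isClosed isClosed_closure)
  refine totallyBounded_iff.2 fun ε hε ↦ ?_
  obtain ⟨N, l, hl⟩ := h (ε / 4) (by positivity)
  set Φ := ContinuousLinearMap.pi l
  obtain ⟨K, hK, hΦK⟩ :=
    (isCompactOperator_of_locallyCompactSpace_dom Φ).image_closedBall_subset_compact 1
  refine exists_finite_cover_image_of_dist_le (g := Φ)
    (hK.totallyBounded.subset hΦK) N.cast_nonneg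
    (by linarith : ε / 2 < ε) fun x hx y hy ↦ ?_
  have hxy : dist x y ≤ 2 := by
    linarith [dist_triangle_right x y 0, mem_closedBall.1 hx, mem_closedBall.1 hy]
  calc dist (L x) (L y) ≤ ε / 4 * dist x y + N * dist (Φ x) (Φ y) :=
        L.dist_le_of_norm_le_add_sum_abs hl x y
    _ ≤ ε / 4 * 2 + N * dist (Φ x) (Φ y) := by gcongr
    _ = ε / 2 + N * dist (Φ x) (Φ y) := by ring

/-- **Compactness criterion** (Faure–Gouëzel–Lanneau, Proposition 2.8).
If for every `ε > 0` there are finitely many continuous linear functionals `lᵢ`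
such that `‖L x‖ ≤ ε ‖x‖ + Σᵢ |lᵢ x|` for all `x`, then `L` is a compact operator. -/
theorem compact_of_finitely_many_functionals
    {B C : Type*} [NormedAddCommGroup B] [NormedSpace ℝ B] [CompleteSpace B]
    [NormedAddCommGroup C] [NormedSpace ℝ C] [CompleteSpace C]
    (L : B →L[ℝ] C)
    (h : ∀ ε > (0 : ℝ), ∃ (N : ℕ) (l : Fin N → (B →L[ℝ] ℝ)),
      ∀ x : B, ‖L x‖ ≤ ε * ‖x‖ + ∑ i : Fin N, |l i x|) :
    IsCompactOperator L :=
  compact_of_finitely_many_functionals_general L h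
end

section
/- Let B₁, B₂ be Banach spaces with a continuous injection B₁ ↪ B₂, and let T be a bounded operator on both B₁ and B₂ (agreeing on B₁). Assume ρ_ess(T|B₁) ≤ ρ and ρ_ess(T|B₂) ≤ ρ for some ρ > 0, and that a common dense subspace is invariant. Then the eigenvalues of T on B₁ and on B₂ in {z ∈ ℂ : |z| > ρ} coincide, together with their generalized eigenspaces, which are contained in B₁ ∩ B₂. (Spectral independence of the Banach space, Baladi–Tsujii Lemma A.1, in the special case where the spaces are nested.) -/
/-- The essential spectral radius of a bounded operator: the infimum of the spectral radii
of its compact perturbations. -/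
noncomputable def essSpectralRadius {B : Type*} [NormedAddCommGroup B] [NormedSpace ℂ B]
    (T : B →L[ℂ] B) : ENNReal :=
  ⨅ K ∈ {K : B →L[ℂ] B | IsCompactOperator K}, spectralRadius ℂ (T - K)

/-!
Fix `‖μ‖ > ρ` and a compact `K` with `spectralRadius (T - K) < ‖μ‖`. By Gelfand's formula some
power satisfies `T ^ j = A + K'` with `K'` compact and `‖A‖ < ‖μ ^ j‖ / 4`. Riesz's argument
(Riesz's lemma played against the compactness of `K'`) shows that `S = T ^ j - μ ^ j` has finite
ascent and descent, so `B = ker S ^ p ⊕ range S ^ p` for all large `p`, with `ker S ^ p`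
finite-dimensional and `range S ^ p` closed; the same `j` and `p` serve on `B₁` and on `B₂`.
The closed subspace `range S₂ ^ p + ι (ker S₁ ^ p)` contains the dense image of `B₁`, hence is
all of `B₂`; a generalized eigenvector of `T₂` lies in `ker S₂ ^ p`, hence in `ι (ker S₁ ^ p)`.
-/

namespace Module.End

open LinearMap (ker range mem_ker mem_range_self)

variable {K V : Type*} [DivisionRing K] [AddCommGroup V] [Module K V] (f : Module.End K V)

theorem ker_pow_eq_of_ker_pow_succ_le {a : ℕ} (h : ker (f ^ (a + 1)) ≤ ker (f ^ a)) {n : ℕ}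
    (hn : a ≤ n) : ker (f ^ n) = ker (f ^ a) := by
  obtain ⟨m, rfl⟩ := Nat.exists_eq_add_of_le hn
  exact (ker_pow_constant (le_antisymm (f.iterateKer.monotone a.le_succ) h) m).symm

theorem range_pow_eq_of_range_pow_le_succ {b : ℕ} (h : range (f ^ b) ≤ range (f ^ (b + 1)))
    {n : ℕ} (hn : b ≤ n) : range (f ^ n) = range (f ^ b) := by
  have hb : range (f ^ (b + 1)) = range (f ^ b) :=
    le_antisymm (f.iterateRange.monotone b.le_succ) h
  induction n, hn using Nat.le_induction with
  | base => rfl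
  | succ n hbn ih =>
    obtain ⟨m, rfl⟩ := Nat.exists_eq_add_of_le' hbn
    rw [← ih, add_assoc, pow_add, mul_eq_comp, LinearMap.range_comp, hb, ← LinearMap.range_comp,
      ← mul_eq_comp, ← pow_add]

theorem disjoint_ker_pow_range_pow {n : ℕ} (h : ker (f ^ (n + n)) = ker (f ^ n)) :
    Disjoint (ker (f ^ n)) (range (f ^ n)) := by
  rw [Submodule.disjoint_def]
  rintro _ hx ⟨y, rfl⟩
  have hy : y ∈ ker (f ^ (n + n)) := by
    rwa [mem_ker, pow_add, mul_apply]
  rwa [h] at hy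

theorem codisjoint_ker_pow_range_pow {n : ℕ} (h : range (f ^ (n + n)) = range (f ^ n)) :
    Codisjoint (ker (f ^ n)) (range (f ^ n)) := by
  rw [codisjoint_iff, Submodule.eq_top_iff']
  intro x
  obtain ⟨y, hy⟩ : (f ^ n) x ∈ range (f ^ (n + n)) := h ▸ mem_range_self _ x
  refine Submodule.mem_sup.mpr ⟨x - (f ^ n) y, ?_, (f ^ n) y, mem_range_self _ y,
    sub_add_cancel x _⟩
  rw [mem_ker, map_sub, ← mul_apply, ← pow_add, hy, sub_self]

theorem eventually_isCompl_ker_pow_range_pow_of_le (hker : ∃ a, ker (f ^ (a + 1)) ≤ ker (f ^ a))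
    (hrange : ∃ b, range (f ^ b) ≤ range (f ^ (b + 1))) :
    ∀ᶠ n in Filter.atTop, IsCompl (ker (f ^ n)) (range (f ^ n)) := by
  obtain ⟨a, ha⟩ := hker
  obtain ⟨b, hb⟩ := hrange
  filter_upwards [Filter.eventually_ge_atTop (max a b)] with n hn
  have hna : a ≤ n := le_of_max_le_left hn
  have hnb : b ≤ n := le_of_max_le_right hn
  exact ⟨f.disjoint_ker_pow_range_pow <| (f.ker_pow_eq_of_ker_pow_succ_le ha (by omega)).trans
      (f.ker_pow_eq_of_ker_pow_succ_le ha hna).symm,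
    f.codisjoint_ker_pow_range_pow <| (f.range_pow_eq_of_range_pow_le_succ hb (by omega)).trans
      (f.range_pow_eq_of_range_pow_le_succ hb hnb).symm⟩

end Module.End

open Filter Topology

section Compact

variable {𝕜 E F : Type*} [NontriviallyNormedField 𝕜] [NormedAddCommGroup E] [NormedSpace 𝕜 E]
  [NormedAddCommGroup F] [NormedSpace 𝕜 F]

theorem IsCompactOperator.exists_subseq_tendsto {K : E →L[𝕜] F} (hK : IsCompactOperator K)
    {x : ℕ → E} {c : ℝ} (hx : ∀ n, ‖x n‖ ≤ c) :
    ∃ z, ∃ φ : ℕ → ℕ, StrictMono φ ∧ Tendsto (fun n ↦ K (x (φ n))) atTop (𝓝 z) := by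
  obtain ⟨z, -, φ, hφ, hz⟩ := (hK.isCompact_closure_image_closedBall (f := (K : E →ₗ[𝕜] F)) c)
    |>.tendsto_subseq fun n ↦ subset_closure ⟨x n, mem_closedBall_zero_iff.mpr (hx n), rfl⟩
  exact ⟨z, φ, hφ, hz⟩

theorem IsCompactOperator.exists_lt_norm_sub_lt {K : E →L[𝕜] F} (hK : IsCompactOperator K)
    {x : ℕ → E} {c : ℝ} (hx : ∀ n, ‖x n‖ ≤ c) {δ : ℝ} (hδ : 0 < δ) :
    ∃ m n, m < n ∧ ‖K (x n) - K (x m)‖ < δ := by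
  obtain ⟨z, φ, hφ, hz⟩ := hK.exists_subseq_tendsto hx
  obtain ⟨N, hN⟩ := Metric.cauchySeq_iff'.mp hz.cauchySeq δ hδ
  exact ⟨φ N, φ (N + 1), hφ N.lt_succ_self, by simpa [dist_eq_norm] using hN (N + 1) N.le_succ⟩

theorem IsCompactOperator.pow_sub_pow {T T' : E →L[𝕜] E} (h : IsCompactOperator (T - T'))
    (n : ℕ) : IsCompactOperator (T ^ n - T' ^ n) := by
  induction n with
  | zero => simpa using isCompactOperator_zero
  | succ n ih =>
    have hsplit : T ^ (n + 1) - T' ^ (n + 1) = (T ^ n - T' ^ n) * T + T' ^ n * (T - T') := by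
      rw [pow_succ, pow_succ, sub_mul, mul_sub]
      abel
    rw [hsplit]
    exact (ih.comp_clm T).add (h.clm_comp (T' ^ n))

end Compact

section UnitAddCompact

variable {𝕜 E : Type*} [RCLike 𝕜] [NormedAddCommGroup E] [NormedSpace 𝕜 E]

def IsUnitAddCompact (Φ : E →L[𝕜] E) : Prop :=
  ∃ G K : E →L[𝕜] E, IsUnit G ∧ IsCompactOperator K ∧ Φ = G + K

namespace IsUnitAddCompact

variable {Φ Ψ : E →L[𝕜] E}

theorem mul (hΦ : IsUnitAddCompact Φ) (hΨ : IsUnitAddCompact Ψ) : IsUnitAddCompact (Φ * Ψ) := by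
  obtain ⟨G, K, hG, hK, rfl⟩ := hΦ
  obtain ⟨G', K', hG', hK', rfl⟩ := hΨ
  refine ⟨G * G', G * K' + K * (G' + K'), hG.mul hG', (hK'.clm_comp G).add (hK.comp_clm _), ?_⟩
  rw [add_mul, mul_add, add_assoc]

theorem pow (hΦ : IsUnitAddCompact Φ) (n : ℕ) : IsUnitAddCompact (Φ ^ n) := by
  induction n with
  | zero => exact ⟨1, 0, isUnit_one, isCompactOperator_zero, (add_zero 1).symm⟩
  | succ n ih => simpa only [pow_succ] using ih.mul hΦ

/-- On `ker (G + K)` the identity equals the compact operator `-G⁻¹ K`. -/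
theorem finiteDimensional_ker (hΦ : IsUnitAddCompact Φ) : FiniteDimensional 𝕜 Φ.ker := by
  obtain ⟨G, K, hG, hK, rfl⟩ := hΦ
  set L : E →L[𝕜] E := -(↑hG.unit⁻¹ * K)
  have hL : ∀ v ∈ (G + K).ker, L v = v := by
    intro v hv
    have hKv : K v = -G v := eq_neg_of_add_eq_zero_right hv
    rw [neg_apply, mul_apply_eq_comp, hKv, map_neg, neg_neg, ← mul_apply_eq_comp, hG.val_inv_mul,
      one_apply_eq_self]
  have hmaps : ∀ v ∈ (G + K).ker, L v ∈ (G + K).ker := fun v hv ↦ (hL v hv).symm ▸ hv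
  have hid : (L : E →ₗ[𝕜] E).restrict hmaps = LinearMap.id :=
    LinearMap.ext fun v ↦ Subtype.ext (hL v v.2)
  have hLc : IsCompactOperator (L : E →ₗ[𝕜] E) := (hK.clm_comp _).neg
  have hid_compact := hLc.restrict hmaps (ContinuousLinearMap.isClosed_ker _)
  rw [hid] at hid_compact
  exact FiniteDimensional.of_isCompactOperator_id hid_compact

theorem exists_subseq_tendsto (hΦ : IsUnitAddCompact Φ) {x : ℕ → E} {c : ℝ}
    (hx : ∀ n, ‖x n‖ ≤ c) {y : E} (hy : Tendsto (fun n ↦ Φ (x n)) atTop (𝓝 y)) :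
    ∃ z, ∃ φ : ℕ → ℕ, StrictMono φ ∧ Tendsto (fun n ↦ x (φ n)) atTop (𝓝 z) ∧ Φ z = y := by
  obtain ⟨G, K, hG, hK, rfl⟩ := hΦ
  obtain ⟨w, φ, hφ, hw⟩ := hK.exists_subseq_tendsto hx
  set Gi : E →L[𝕜] E := ↑hG.unit⁻¹
  have hGi : ∀ v, Gi ((G + K) v - K v) = v := fun v ↦ by
    rw [add_apply, add_sub_cancel_right, ← mul_apply_eq_comp, hG.val_inv_mul, one_apply_eq_self]
  have hyφ := hy.comp hφ.tendsto_atTop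
  have hlim : Tendsto (fun n ↦ x (φ n)) atTop (𝓝 (Gi (y - w))) :=
    ((Gi.continuous.tendsto _).comp (hyφ.sub hw)).congr fun n ↦ hGi (x (φ n))
  exact ⟨_, φ, hφ, hlim, tendsto_nhds_unique (((G + K).continuous.tendsto _).comp hlim) hyφ⟩

theorem exists_pos_mul_norm_le (hΦ : IsUnitAddCompact Φ) {C : Submodule 𝕜 E}
    (hC : IsClosed (C : Set E)) (hdisj : Disjoint Φ.ker C) :
    ∃ c > 0, ∀ x ∈ C, c * ‖x‖ ≤ ‖Φ x‖ := by
  by_contra! h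
  choose x hxC hx using fun n : ℕ ↦ h (1 / (n + 1)) (by positivity)
  have hx0 : ∀ n, 0 < ‖x n‖ := fun n ↦ by
    by_contra! h0
    simpa [norm_le_zero_iff.mp h0] using hx n
  set v : ℕ → E := fun n ↦ ((‖x n‖⁻¹ : ℝ) : 𝕜) • x n
  have hv : ∀ n, ‖v n‖ = 1 := fun n ↦ by
    simp [v, norm_smul, (hx0 n).ne']
  have hΦv : Tendsto (fun n ↦ Φ (v n)) atTop (𝓝 0) := by
    refine squeeze_zero_norm (fun n ↦ ?_) tendsto_one_div_add_atTop_nhds_zero_nat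
    rw [map_smul, norm_smul, RCLike.norm_ofReal, abs_inv, abs_norm, inv_mul_le_iff₀ (hx0 n)]
    exact (hx n).le.trans_eq (mul_comm _ _)
  obtain ⟨z, φ, -, hz, hΦz⟩ := hΦ.exists_subseq_tendsto (fun n ↦ (hv n).le) hΦv
  have hzC : z ∈ C := hC.mem_of_tendsto hz (Eventually.of_forall fun n ↦ C.smul_mem _ (hxC _))
  have hz1 : ‖z‖ = 1 := tendsto_nhds_unique hz.norm (by simp only [hv, tendsto_const_nhds])
  simp [Submodule.disjoint_def.mp hdisj z hΦz hzC] at hz1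

/-- `Φ` is bounded below on a closed complement of its finite-dimensional kernel. -/
theorem isClosed_range (hΦ : IsUnitAddCompact Φ) : IsClosed (Φ.range : Set E) := by
  have := hΦ.finiteDimensional_ker
  obtain ⟨C, hC, hcompl⟩ :=
    (Submodule.ClosedComplemented.of_finiteDimensional Φ.ker).exists_isClosed_isCompl
  obtain ⟨c, hc, hbound⟩ := hΦ.exists_pos_mul_norm_le hC hcompl.disjoint
  have hrange : ∀ y ∈ Φ.range, ∃ x ∈ C, Φ x = y := by
    rintro _ ⟨x, rfl⟩
    obtain ⟨k, hk, x', hx', rfl⟩ :=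
      Submodule.mem_sup.mp (hcompl.sup_eq_top ▸ Submodule.mem_top : x ∈ Φ.ker ⊔ C)
    exact ⟨x', hx', by rw [map_add, (hk : Φ k = 0), zero_add]; rfl⟩
  refine IsSeqClosed.isClosed fun u y hu huy ↦ ?_
  choose x hxC hx using fun n ↦ hrange _ (hu n)
  obtain ⟨M, hM⟩ := huy.norm.bddAbove_range
  have hxM : ∀ n, ‖x n‖ ≤ M / c := fun n ↦ (le_div_iff₀' hc).mpr <|
    (hbound _ (hxC n)).trans (hx n ▸ hM ⟨n, rfl⟩)
  obtain ⟨z, -, -, -, hz⟩ := hΦ.exists_subseq_tendsto hxM (by simpa only [hx] using huy)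
  exact ⟨z, hz⟩

end IsUnitAddCompact

end UnitAddCompact

section Riesz

variable {𝕜 E : Type*} [RCLike 𝕜] [NormedAddCommGroup E] [NormedSpace 𝕜 E]

theorem exists_mem_norm_eq_one_forall_le_norm_sub {F V : Submodule 𝕜 E}
    (hF : IsClosed (F : Set E)) (hFV : F ≤ V) (hVF : ¬V ≤ F) {r : ℝ} (hr : r < 1) :
    ∃ x ∈ V, ‖x‖ = 1 ∧ ∀ y ∈ F, r ≤ ‖x - y‖ := by
  obtain ⟨v, hvV, hvF⟩ := SetLike.not_le_iff_exists.mp hVF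
  obtain ⟨x, -, hx1, hx⟩ := riesz_lemma_of_lt_one (F := F.comap V.subtype)
    (hF.preimage continuous_subtype_val) ⟨⟨v, hvV⟩, hvF⟩ hr
  exact ⟨x, x.2, hx1, fun y hy ↦ hx ⟨y, hFV hy⟩ hy⟩

theorem isUnit_sub_smul_one [CompleteSpace E] {A : E →L[𝕜] E} {μ : 𝕜} (h : ‖A‖ < ‖μ‖) :
    IsUnit (A - μ • 1) := by
  have hμ : μ ∈ resolventSet 𝕜 A := spectrum.mem_resolventSet_of_norm_lt_mul <|
    (mul_le_of_le_one_right (norm_nonneg A) ContinuousLinearMap.norm_id_le).trans_lt h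
  rw [← neg_sub, ← Algebra.algebraMap_eq_smul_one]
  exact hμ.neg

namespace ContinuousLinearMap

theorem ker_pow_le_ker_pow {S : E →L[𝕜] E} {m n : ℕ} (h : m ≤ n) :
    (S ^ m).ker ≤ (S ^ n).ker := by
  rw [toLinearMap_pow, toLinearMap_pow]
  exact (S : E →ₗ[𝕜] E).iterateKer.monotone h

theorem range_pow_le_range_pow {S : E →L[𝕜] E} {m n : ℕ} (h : m ≤ n) :
    (S ^ n).range ≤ (S ^ m).range := by
  rw [toLinearMap_pow, toLinearMap_pow]
  exact (S : E →ₗ[𝕜] E).iterateRange.monotone h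

end ContinuousLinearMap

open ContinuousLinearMap (ker_pow_le_ker_pow range_pow_le_range_pow)

variable {A K : E →L[𝕜] E} {μ : 𝕜}

theorem isUnitAddCompact_add_sub_smul_one [CompleteSpace E] (hK : IsCompactOperator K)
    (hA : ‖A‖ < ‖μ‖) : IsUnitAddCompact (A + K - μ • 1) :=
  ⟨A - μ • 1, K, isUnit_sub_smul_one hA, hK, by abel⟩

/-- With `S = A + K - μ • 1` and `y = x' + μ⁻¹ • (S x' - S x) ∈ F`, one has
`μ • (x - y) = (A x - A x') + (K x - K x')`. -/
theorem le_norm_sub_of_forall_le_norm_sub {x x' : E} (hx : ‖x‖ ≤ 1) (hx' : ‖x'‖ ≤ 1)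
    {F : Submodule 𝕜 E} (hx'F : x' ∈ F) (hSx'F : (A + K - μ • 1) x' ∈ F)
    (hSxF : (A + K - μ • 1) x ∈ F) (hfar : ∀ y ∈ F, 1 / 2 ≤ ‖x - y‖) :
    ‖μ‖ / 2 - 2 * ‖A‖ ≤ ‖K x - K x'‖ := by
  rcases eq_or_ne μ 0 with rfl | hμ
  · simp only [norm_zero, zero_div, zero_sub]
    linarith [norm_nonneg A, norm_nonneg (K x - K x')]
  set S := A + K - μ • 1
  set y := x' + μ⁻¹ • (S x' - S x)
  have hy : y ∈ F := F.add_mem hx'F (F.smul_mem _ (F.sub_mem hSx'F hSxF))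
  have key : μ • (x - y) = (A x - A x') + (K x - K x') := by
    simp only [y, S, sub_apply, add_apply, smul_apply, one_apply_eq_self, smul_sub, smul_add,
      smul_smul, mul_inv_cancel_left₀ hμ, mul_inv_cancel₀ hμ, one_smul]
    abel
  have hA2 : ‖A x - A x'‖ ≤ 2 * ‖A‖ := by
    linarith [norm_sub_le (A x) (A x'), A.le_opNorm_of_le hx, A.le_opNorm_of_le hx']
  have hfar' : ‖μ‖ / 2 ≤ ‖μ • (x - y)‖ := by
    rw [norm_smul]
    linarith [mul_le_mul_of_nonneg_left (hfar y hy) (norm_nonneg μ)]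
  rw [key] at hfar'
  linarith [norm_add_le (A x - A x') (K x - K x')]

theorem exists_ker_pow_succ_le (hK : IsCompactOperator K) (hA : ‖A‖ < ‖μ‖ / 4) :
    ∃ a, ((A + K - μ • 1) ^ (a + 1)).ker ≤ ((A + K - μ • 1) ^ a).ker := by
  set S := A + K - μ • 1
  by_contra! h
  have hS : ∀ {n x}, x ∈ (S ^ (n + 1)).ker → S x ∈ (S ^ n).ker := fun hx ↦ by
    rwa [LinearMap.mem_ker, ContinuousLinearMap.coe_coe, ← mul_apply_eq_comp, ← pow_succ]
  choose x hxV hx1 hxfar using fun n ↦ exists_mem_norm_eq_one_forall_le_norm_sub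
    (S ^ n).isClosed_ker (ker_pow_le_ker_pow n.le_succ) (h n) (by norm_num : (1 : ℝ) / 2 < 1)
  obtain ⟨m, n, hmn, hKmn⟩ :=
    hK.exists_lt_norm_sub_lt (fun n ↦ (hx1 n).le) (by linarith : 0 < ‖μ‖ / 2 - 2 * ‖A‖)
  have := le_norm_sub_of_forall_le_norm_sub (hx1 n).le (hx1 m).le
    (ker_pow_le_ker_pow hmn (hxV m)) (ker_pow_le_ker_pow hmn.le (hS (hxV m))) (hS (hxV n))
    (hxfar n)
  linarith

theorem exists_range_pow_le_succ [CompleteSpace E] (hK : IsCompactOperator K)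
    (hA : ‖A‖ < ‖μ‖ / 4) :
    ∃ b, ((A + K - μ • 1) ^ b).range ≤ ((A + K - μ • 1) ^ (b + 1)).range := by
  set S := A + K - μ • 1
  by_contra! h
  have hS : ∀ {n x}, x ∈ (S ^ n).range → S x ∈ (S ^ (n + 1)).range := by
    rintro n _ ⟨u, rfl⟩
    exact ⟨u, by rw [ContinuousLinearMap.coe_coe, pow_succ', mul_apply_eq_comp]; rfl⟩
  have hclosed : ∀ n, IsClosed ((S ^ n).range : Set E) := fun n ↦
    ((isUnitAddCompact_add_sub_smul_one hK (by linarith [norm_nonneg A])).pow n).isClosed_range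
  choose x hxV hx1 hxfar using fun n ↦ exists_mem_norm_eq_one_forall_le_norm_sub
    (hclosed (n + 1)) (range_pow_le_range_pow n.le_succ) (h n) (by norm_num : (1 : ℝ) / 2 < 1)
  obtain ⟨m, n, hmn, hKmn⟩ :=
    hK.exists_lt_norm_sub_lt (fun n ↦ (hx1 n).le) (by linarith : 0 < ‖μ‖ / 2 - 2 * ‖A‖)
  have := le_norm_sub_of_forall_le_norm_sub (hx1 m).le (hx1 n).le
    (range_pow_le_range_pow hmn (hxV n)) (range_pow_le_range_pow (by omega) (hS (hxV n)))
    (hS (hxV m)) (hxfar m)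
  rw [norm_sub_rev] at this
  linarith

theorem eventually_isCompl_ker_pow_range_pow [CompleteSpace E] (hK : IsCompactOperator K)
    (hA : ‖A‖ < ‖μ‖ / 4) :
    ∀ᶠ n in atTop, IsCompl ((A + K - μ • 1) ^ n).ker ((A + K - μ • 1) ^ n).range := by
  have hker := exists_ker_pow_succ_le hK hA
  have hrange := exists_range_pow_le_succ hK hA
  simp only [ContinuousLinearMap.toLinearMap_pow] at hker hrange ⊢
  exact Module.End.eventually_isCompl_ker_pow_range_pow_of_le _ hker hrange

end Riesz

section Intertwining

variable {𝕜 E F : Type*} [NontriviallyNormedField 𝕜] [NormedAddCommGroup E] [NormedSpace 𝕜 E]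
  [NormedAddCommGroup F] [NormedSpace 𝕜 F]

namespace ContinuousLinearMap

variable {ι : E →L[𝕜] F} {T₁ : E →L[𝕜] E} {T₂ : F →L[𝕜] F}

theorem semiconj_pow (h : Function.Semiconj ι T₁ T₂) (n : ℕ) :
    Function.Semiconj ι ⇑(T₁ ^ n) ⇑(T₂ ^ n) := by
  rw [FunLike.coe_pow_eq_iterate, FunLike.coe_pow_eq_iterate]
  exact h.iterate_right n

theorem semiconj_sub_smul_one (h : Function.Semiconj ι T₁ T₂) (c : 𝕜) :
    Function.Semiconj ι ⇑(T₁ - c • 1) ⇑(T₂ - c • 1) := fun x ↦ by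
  simp [h.eq x]

end ContinuousLinearMap

/-- `T ^ j - μ ^ j = Q (T - μ)` with `Q` a polynomial in `T`. -/
theorem ker_pow_sub_smul_one_le (T : E →L[𝕜] E) (μ : 𝕜) (j k : ℕ) :
    ((T - μ • 1) ^ k).ker ≤ ((T ^ j - μ ^ j • 1) ^ k).ker := by
  have hc : Commute T (μ • 1) := (Commute.one_right T).smul_right μ
  set Q := ∑ i ∈ Finset.range j, T ^ i * (μ • 1 : E →L[𝕜] E) ^ (j - 1 - i)
  have hQ : T ^ j - μ ^ j • 1 = Q * (T - μ • 1) := by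
    rw [hc.geom_sum₂_mul, smul_pow, one_pow]
  have hQc : Commute Q (T - μ • 1) := Commute.sum_left _ _ _ fun i _ ↦
    (((Commute.refl T).sub_right hc).pow_left i).mul_left
      ((hc.symm.sub_right (Commute.refl _)).pow_left _)
  intro x hx
  have hx' : ((T - μ • 1) ^ k) x = 0 := hx
  rw [LinearMap.mem_ker, ContinuousLinearMap.coe_coe, hQ, hQc.mul_pow, mul_apply_eq_comp, hx',
    map_zero]

/-- The closed subspace `range S₂ + ι (ker S₁)` contains the dense set `range ι`, so it is
everything; a vector of `ker S₂` then differs from its `ι (ker S₁)`-component by an element of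
`ker S₂ ⊓ range S₂ = 0`. -/
theorem ker_le_map_ker_of_semiconj [CompleteSpace 𝕜] {ι : E →L[𝕜] F} {S₁ : E →L[𝕜] E}
    {S₂ : F →L[𝕜] F} (hι : DenseRange ι) (h : Function.Semiconj ι S₁ S₂)
    [FiniteDimensional 𝕜 S₁.ker] (hS₁ : Codisjoint S₁.ker S₁.range)
    (hS₂ : Disjoint S₂.ker S₂.range) (hclosed : IsClosed (S₂.range : Set F)) :
    S₂.ker ≤ S₁.ker.map (ι : E →ₗ[𝕜] F) := by
  set W := S₁.ker.map (ι : E →ₗ[𝕜] F)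
  have hsub : Set.range ι ⊆ (S₂.range ⊔ W : Submodule 𝕜 F) := by
    rintro _ ⟨v, rfl⟩
    obtain ⟨a, ha, _, ⟨u, rfl⟩, rfl⟩ :=
      Submodule.mem_sup.mp (codisjoint_iff.mp hS₁ ▸ Submodule.mem_top : v ∈ S₁.ker ⊔ S₁.range)
    rw [map_add, add_comm]
    exact Submodule.add_mem_sup ⟨ι u, (h u).symm⟩ (Submodule.mem_map_of_mem ha)
  have htop : S₂.range ⊔ W = ⊤ := Submodule.eq_top_iff'.mpr fun z ↦
    (Submodule.isClosed_sup_finiteDimensional _ _ hclosed).closure_subset_iff.mpr hsub (hι z)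
  intro x hx
  obtain ⟨s, hs, _, ⟨y, hy, rfl⟩, rfl⟩ :=
    Submodule.mem_sup.mp (htop ▸ Submodule.mem_top : x ∈ S₂.range ⊔ W)
  have hιy : ι y ∈ S₂.ker := by
    have hy' : S₁ y = 0 := hy
    rw [LinearMap.mem_ker, ContinuousLinearMap.coe_coe, ← h y, hy', map_zero]
  have hs0 : s = 0 := Submodule.disjoint_def.mp hS₂ s (by simpa using S₂.ker.sub_mem hx hιy) hs
  rw [hs0, zero_add]
  exact Submodule.mem_map_of_mem hy

end Intertwining

section Spectral

open ContinuousLinearMap (ker_pow_le_ker_pow semiconj_pow semiconj_sub_smul_one)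

variable {E : Type*} [NormedAddCommGroup E] [NormedSpace ℂ E]

theorem exists_isCompactOperator_spectralRadius_sub_lt {T : E →L[ℂ] E} {r : ENNReal}
    (h : essSpectralRadius T < r) :
    ∃ K : E →L[ℂ] E, IsCompactOperator K ∧ spectralRadius ℂ (T - K) < r := by
  simpa only [essSpectralRadius, iInf_lt_iff, Set.mem_ofPred_eq, exists_prop] using h

theorem eventually_norm_pow_lt {A : Type*} [NormedRing A] [NormedAlgebra ℂ A] [CompleteSpace A]
    (a : A) {r : ℝ} (h : spectralRadius ℂ a < ENNReal.ofReal r) :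
    ∀ᶠ n in atTop, ‖a ^ n‖ < r ^ n := by
  have hr : 0 < r := ENNReal.ofReal_pos.mp (pos_of_gt h)
  filter_upwards [(spectrum.pow_norm_pow_one_div_tendsto_nhds_spectralRadius a).eventually_lt_const
    h, eventually_ne_atTop 0] with n hn hn0
  rw [ENNReal.ofReal_lt_ofReal_iff hr] at hn
  calc ‖a ^ n‖ = (‖a ^ n‖ ^ (1 / (n : ℝ))) ^ n := by
        rw [← Real.rpow_natCast, ← Real.rpow_mul (norm_nonneg _),
          one_div_mul_cancel (Nat.cast_ne_zero.mpr hn0), Real.rpow_one]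
    _ < r ^ n := pow_lt_pow_left₀ hn (by positivity) hn0

theorem eventually_exists_pow_eq_add [CompleteSpace E] {T : E →L[ℂ] E} {μ : ℂ}
    (h : essSpectralRadius T < ENNReal.ofReal ‖μ‖) :
    ∀ᶠ j in atTop, ∃ A K : E →L[ℂ] E, T ^ j = A + K ∧ IsCompactOperator K ∧
      ‖A‖ < ‖μ ^ j‖ / 4 := by
  obtain ⟨K, hK, hKμ⟩ := exists_isCompactOperator_spectralRadius_sub_lt h
  obtain ⟨r, hr0, hKr, hrμ⟩ := ENNReal.lt_iff_exists_real_btwn.mp hKμ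
  have hrμ' : r < ‖μ‖ := (ENNReal.ofReal_lt_ofReal_iff'.mp hrμ).1
  have hμ : 0 < ‖μ‖ := hr0.trans_lt hrμ'
  have hratio : ∀ᶠ j in atTop, (r / ‖μ‖) ^ j < 1 / 4 :=
    (tendsto_pow_atTop_nhds_zero_of_lt_one (by positivity) ((div_lt_one hμ).mpr hrμ'))
      |>.eventually_lt_const (by norm_num)
  filter_upwards [eventually_norm_pow_lt (T - K) hKr, hratio] with j hj hrj
  have hK' : IsCompactOperator (T - (T - K)) := by rwa [sub_sub_cancel]
  refine ⟨(T - K) ^ j, T ^ j - (T - K) ^ j, (add_sub_cancel _ _).symm, hK'.pow_sub_pow j, ?_⟩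
  rw [div_pow, div_lt_iff₀ (by positivity)] at hrj
  rw [norm_pow μ j]
  linarith

theorem exists_apply_eq_of_pow_sub_smul_one_apply_eq_zero {B₁ B₂ : Type*}
    [NormedAddCommGroup B₁] [NormedSpace ℂ B₁] [CompleteSpace B₁]
    [NormedAddCommGroup B₂] [NormedSpace ℂ B₂] [CompleteSpace B₂]
    {ι : B₁ →L[ℂ] B₂} (hinj : Function.Injective ι) (hdense : DenseRange ι)
    {T₁ : B₁ →L[ℂ] B₁} {T₂ : B₂ →L[ℂ] B₂} (hcomm : Function.Semiconj ι T₁ T₂) {μ : ℂ}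
    (h₁ : essSpectralRadius T₁ < ENNReal.ofReal ‖μ‖)
    (h₂ : essSpectralRadius T₂ < ENNReal.ofReal ‖μ‖) {k : ℕ} {x : B₂}
    (hx : ((T₂ - μ • 1) ^ k) x = 0) :
    ∃ y : B₁, ι y = x ∧ ((T₁ - μ • 1) ^ k) y = 0 := by
  obtain ⟨j, ⟨A₁, K₁, hT₁, hK₁, hA₁⟩, ⟨A₂, K₂, hT₂, hK₂, hA₂⟩⟩ :=
    ((eventually_exists_pow_eq_add h₁).and (eventually_exists_pow_eq_add h₂)).exists
  obtain ⟨p, ⟨hcompl₁, hcompl₂⟩, hkp⟩ := (((eventually_isCompl_ker_pow_range_pow hK₁ hA₁).and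
    (eventually_isCompl_ker_pow_range_pow hK₂ hA₂)).and (eventually_ge_atTop k)).exists
  rw [← hT₁] at hcompl₁
  rw [← hT₂] at hcompl₂
  have hΦ₁ : IsUnitAddCompact (T₁ ^ j - μ ^ j • 1) :=
    hT₁ ▸ isUnitAddCompact_add_sub_smul_one hK₁ (by linarith [norm_nonneg A₁])
  have hΦ₂ : IsUnitAddCompact (T₂ ^ j - μ ^ j • 1) :=
    hT₂ ▸ isUnitAddCompact_add_sub_smul_one hK₂ (by linarith [norm_nonneg A₂])
  have := (hΦ₁.pow p).finiteDimensional_ker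
  have hxp : x ∈ ((T₂ ^ j - μ ^ j • 1) ^ p).ker :=
    ker_pow_le_ker_pow hkp (ker_pow_sub_smul_one_le T₂ μ j k hx)
  obtain ⟨y, -, rfl⟩ := ker_le_map_ker_of_semiconj hdense
    (semiconj_pow (semiconj_sub_smul_one (semiconj_pow hcomm j) _) p) hcompl₁.codisjoint
    hcompl₂.disjoint (hΦ₂.pow p).isClosed_range hxp
  refine ⟨y, rfl, hinj ?_⟩
  rw [map_zero]
  exact (semiconj_pow (semiconj_sub_smul_one hcomm μ) k y).trans hx

end Spectral

/-- **Spectral independence of the Banach space** (Baladi–Tsujii, Lemma A.1, nested case).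
If `B₁` embeds continuously, injectively and densely into `B₂`, `T` acts boundedly on
both (compatibly with the embedding) and has essential spectral radius `≤ ρ` on both,
then the eigenvalues of modulus `> ρ` on `B₁` and on `B₂` coincide, and the generalized
eigenspaces coincide: every generalized eigenvector in `B₂` already lies in `B₁`. -/
theorem spectral_independence_nested
    {B₁ B₂ : Type*} [NormedAddCommGroup B₁] [NormedSpace ℂ B₁] [CompleteSpace B₁]
    [NormedAddCommGroup B₂] [NormedSpace ℂ B₂] [CompleteSpace B₂]
    (ι : B₁ →L[ℂ] B₂) (hinj : Function.Injective ι) (hdense : DenseRange ι)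
    (T₁ : B₁ →L[ℂ] B₁) (T₂ : B₂ →L[ℂ] B₂)
    (hcomm : ∀ x : B₁, ι (T₁ x) = T₂ (ι x))
    (ρ : ℝ) (hρ : 0 < ρ)
    (h₁ : essSpectralRadius T₁ ≤ ENNReal.ofReal ρ)
    (h₂ : essSpectralRadius T₂ ≤ ENNReal.ofReal ρ) :
    ∀ μ : ℂ, ρ < ‖μ‖ →
      ((∃ x : B₁, x ≠ 0 ∧ T₁ x = μ • x) ↔ (∃ x : B₂, x ≠ 0 ∧ T₂ x = μ • x)) ∧
      (∀ (k : ℕ) (x : B₂), ((T₂ - μ • (1 : B₂ →L[ℂ] B₂)) ^ k) x = 0 →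
        ∃ y : B₁, ι y = x ∧ ((T₁ - μ • (1 : B₁ →L[ℂ] B₁)) ^ k) y = 0) := by
  intro μ hμ
  have hρμ : ENNReal.ofReal ρ < ENNReal.ofReal ‖μ‖ :=
    (ENNReal.ofReal_lt_ofReal_iff (hρ.trans hμ)).mpr hμ
  have lift : ∀ (k : ℕ) (x : B₂), ((T₂ - μ • 1) ^ k) x = 0 →
      ∃ y : B₁, ι y = x ∧ ((T₁ - μ • 1) ^ k) y = 0 := fun _ _ ↦
    exists_apply_eq_of_pow_sub_smul_one_apply_eq_zero hinj hdense hcomm (h₁.trans_lt hρμ)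
      (h₂.trans_lt hρμ)
  refine ⟨⟨fun ⟨x, hx0, hx⟩ ↦ ⟨ι x, (map_ne_zero_iff ι hinj).mpr hx0, ?_⟩,
    fun ⟨x, hx0, hx⟩ ↦ ?_⟩, lift⟩
  · rw [← hcomm, hx, map_smul]
  · obtain ⟨y, rfl, hy⟩ := lift 1 x (by simp [hx])
    exact ⟨y, by rintro rfl; simp at hx0, by simpa [sub_eq_zero] using hy⟩
end

section
/- Let (B_l, d) be a cochain complex of complex vector spaces with a chain endomorphism f_*, and μ ∈ ℂ. Suppose ω ∈ B_l is closed with f_* ω = μ ω + du for some u ∈ B_{l−1}, and suppose the operator (f_* − μ·id) restricted to the subspace of exact elements E_l = d(B_{l−1}) ⊆ B_l is bijective. Then there exists u' ∈ B_{l−1} such that ω' = ω + du' satisfies f_* ω' = μ ω'; in particular [ω'] = [ω] in cohomology and μ is an eigenvalue of f_* on B_l. -/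
theorem Submodule.exists_mem_apply_add_eq_smul_add {R M : Type*} [CommRing R] [AddCommGroup M]
    [Module R M] (f : M →ₗ[R] M) (μ : R) (E : Submodule R M) {ω : M}
    (hω : f ω - μ • ω ∈ E) (hsurj : ∀ x ∈ E, ∃ e ∈ E, f e - μ • e = x) :
    ∃ e ∈ E, f (ω + e) = μ • (ω + e) := by
  obtain ⟨e, heE, he⟩ := hsurj _ (E.neg_mem hω)
  refine ⟨e, heE, ?_⟩
  rw [← sub_eq_zero, map_add, smul_add]
  calc f ω + f e - (μ • ω + μ • e) = (f ω - μ • ω) + (f e - μ • e) := by abel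
    _ = 0 := by rw [he, add_neg_cancel]

/-- If `ω` is closed with `f ω = μ ω + d u`, and `f − μ·id` is bijective on the subspace
of exact elements `E = im d₀`, then `ω` can be corrected by an exact element:
there is `u'` with `ω' = ω + d u'` satisfying `f ω' = μ ω'` (so `[ω'] = [ω]` in
cohomology and `μ` is an eigenvalue of `f` on `B`). -/
theorem correct_by_exact_to_eigenvector
    {Bm B : Type*} [AddCommGroup Bm] [Module ℂ Bm] [AddCommGroup B] [Module ℂ B]
    (d₀ : Bm →ₗ[ℂ] B)
    (fm : Bm →ₗ[ℂ] Bm) (f : B →ₗ[ℂ] B)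
    (hc0 : ∀ u, f (d₀ u) = d₀ (fm u))
    (μ : ℂ) (ω : B) (u : Bm)
    (hω : f ω = μ • ω + d₀ u)
    (hbij : Function.Bijective (fun e : LinearMap.range d₀ =>
      (⟨f e.1 - μ • e.1, by
        obtain ⟨w, hw⟩ := e.2
        exact ⟨fm w - μ • w, by simp [map_sub, map_smul, ← hc0, hw]⟩⟩ :
          LinearMap.range d₀))) :
    ∃ u' : Bm, f (ω + d₀ u') = μ • (ω + d₀ u') := by
  have hexact : f ω - μ • ω ∈ LinearMap.range d₀ :=
    ⟨u, by rw [hω, add_sub_cancel_left]⟩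
  have hsurj : ∀ x ∈ LinearMap.range d₀, ∃ e ∈ LinearMap.range d₀, f e - μ • e = x :=
    fun x hx ↦
      let ⟨e, he⟩ := hbij.surjective ⟨x, hx⟩
      ⟨e.1, e.2, congrArg Subtype.val he⟩
  obtain ⟨_, ⟨u', rfl⟩, hu'⟩ :=
    (LinearMap.range d₀).exists_mem_apply_add_eq_smul_add f μ hexact hsurj
  exact ⟨u', hu'⟩
end
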